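/- (Exponential decay of extracted features) If the kernel is admissible with β = min_r |γ_0(r)|² > 0 and B = max_r |γ_0(r)|², then for each m ≥ 1 and each f ∈ L²(G): Σ_{p∈{1,…,J}^m} ‖S[p]f‖² ≤ B (1−β)^m ‖f‖². -/

import Mathlib

open scoped BigOperators
open MeasureTheory

noncomputable def conv {G : Type*} [Group G] [Fintype G] (f g : G → ℂ) : G → ℂ :=
  fun x => (Fintype.card G : ℂ)⁻¹ * ∑ y, f y * g (y⁻¹ * x)

noncomputable def nsq {G : Type*} [Fintype G] (f : G → ℂ) : ℝ :=
  (Fintype.card G : ℝ)⁻¹ * ∑ x, Complex.normSq (f x)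

noncomputable def ip {G : Type*} [Fintype G] (f g : G → ℂ) : ℂ :=
  (Fintype.card G : ℂ)⁻¹ * ∑ x, f x * (starRingEnd ℂ) (g x)

noncomputable def gwavelet {G : Type*} [Group G] {k : ℕ} (d : Fin k → ℕ)
    (π : (r : Fin k) → G →* Matrix (Fin (d r)) (Fin (d r)) ℂ)
    (γ : Fin k → ℂ) : G → ℂ :=
  fun x => ∑ r, (d r : ℂ) * γ r * Matrix.trace (π r x)

noncomputable def Upath {G : Type*} [Group G] [Fintype G] {J : ℕ}
    (ψ : Fin J → G → ℂ) : List (Fin J) → (G → ℂ) → G → ℂ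
  | [], f => f
  | j :: p, f => Upath ψ p fun x => ((‖conv (ψ j) f x‖ : ℝ) : ℂ)

noncomputable def Sop {G : Type*} [Group G] [Fintype G] {k J : ℕ} (d : Fin k → ℕ)
    (π : (r : Fin k) → G →* Matrix (Fin (d r)) (Fin (d r)) ℂ)
    (γ : Fin (J + 1) → Fin k → ℂ) (p : List (Fin J)) (f : G → ℂ) : G → ℂ :=
  conv (gwavelet d π (γ 0)) (Upath (fun j => gwavelet d π (γ j.succ)) p f)

/-!
The kernels `e_r = d_r χ^r` satisfy `e_r ∗ e_s = δ_{rs} e_r` (Schur orthogonality) and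
`conj (e_r x⁻¹) = e_r x` (unitarity), so the operators `P_r g = e_r ∗ g` are mutually orthogonal
orthogonal projections of `L²(G)`. Convolution with `ψ_γ` acts as `∑_r γ(r) P_r`, whence
`‖ψ_γ ∗ g‖² = ∑_r |γ(r)|² ‖P_r g‖²`, and Bessel's inequality `∑_r ‖P_r g‖² ≤ ‖g‖²` gives
`‖φ ∗ g‖² ≤ B ‖g‖²` and, by admissibility, `∑_{j ≥ 1} ‖ψ_{γ_j} ∗ g‖² ≤ (1 - β) ‖g‖²`.
Taking moduli does not change norms, so induction on the length of the path gives the factor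
`(1 - β)^m`.
-/

open scoped InnerProductSpace

local notation "ℓ²" f => (WithLp.toLp 2 f : EuclideanSpace ℂ _)

section Orthogonal

variable {𝕜 E ι : Type*} [RCLike 𝕜] [NormedAddCommGroup E] [InnerProductSpace 𝕜 E] [Fintype ι]

theorem norm_sum_sq_of_pairwise_inner_eq_zero {v : ι → E}
    (h : Pairwise fun i j => ⟪v i, v j⟫_𝕜 = 0) : ‖∑ i, v i‖ ^ 2 = ∑ i, ‖v i‖ ^ 2 := by
  have hK : ((‖∑ i, v i‖ ^ 2 : ℝ) : 𝕜) = ((∑ i, ‖v i‖ ^ 2 : ℝ) : 𝕜) := by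
    push_cast
    simp only [← inner_self_eq_norm_sq_to_K, sum_inner, inner_sum]
    exact Finset.sum_congr rfl fun i _ => Finset.sum_eq_single i (fun j _ hji => h hji) (by simp)
  exact_mod_cast hK

theorem sum_norm_sq_le_of_orthogonal_projections {v : ι → E} {x : E}
    (horth : Pairwise fun i j => ⟪v i, v j⟫_𝕜 = 0) (hproj : ∀ i, ⟪v i, x - v i⟫_𝕜 = 0) :
    ∑ i, ‖v i‖ ^ 2 ≤ ‖x‖ ^ 2 := by
  have hperp : ⟪∑ i, v i, x - ∑ i, v i⟫_𝕜 = 0 := by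
    rw [sum_inner]
    refine Finset.sum_eq_zero fun i _ => ?_
    rw [inner_sub_right, inner_sum,
      Finset.sum_eq_single i (fun j _ hji => horth (Ne.symm hji)) (by simp),
      ← inner_sub_right, hproj]
  have hpyth := norm_add_sq_eq_norm_sq_add_norm_sq_of_inner_eq_zero _ _ hperp
  rw [add_sub_cancel] at hpyth
  rw [← norm_sum_sq_of_pairwise_inner_eq_zero horth]
  nlinarith [mul_self_nonneg ‖x - ∑ i, v i‖]

end Orthogonal

section Convolution

variable {G : Type*} [Fintype G]

theorem nsq_eq_norm_sq (f : G → ℂ) : nsq f = (Fintype.card G : ℝ)⁻¹ * ‖ℓ² f‖ ^ 2 := by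
  simp [nsq, EuclideanSpace.norm_sq_eq, Complex.normSq_eq_norm_sq]

theorem nsq_nonneg (f : G → ℂ) : 0 ≤ nsq f := by
  rw [nsq_eq_norm_sq]
  positivity

theorem nsq_norm (f : G → ℂ) : nsq (fun x => ((‖f x‖ : ℝ) : ℂ)) = nsq f := by
  simp [nsq, Complex.normSq_eq_norm_sq]

variable [Group G]

theorem conv_assoc (a b f : G → ℂ) : conv a (conv b f) = conv (conv a b) f := by
  ext x
  simp only [conv, Finset.mul_sum, Finset.sum_mul]
  conv_rhs => rw [Finset.sum_comm]
  refine Finset.sum_congr rfl fun y _ => ?_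
  conv_rhs => rw [← Equiv.sum_comp (Equiv.mulLeft y)]
  refine Finset.sum_congr rfl fun z _ => ?_
  simp only [Equiv.coe_mulLeft, mul_inv_rev, inv_mul_cancel_left, mul_assoc]
  ring

theorem conv_zero_left (f : G → ℂ) : conv 0 f = 0 := by
  ext x
  simp [conv]

theorem conv_sum_smul_left {ι : Type*} [Fintype ι] (u : ι → ℂ) (a : ι → G → ℂ) (f : G → ℂ) :
    conv (∑ i, u i • a i) f = ∑ i, u i • conv (a i) f := by
  ext x
  simp only [conv, Finset.sum_apply, Pi.smul_apply, smul_eq_mul, Finset.sum_mul, Finset.mul_sum]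
  rw [Finset.sum_comm]
  exact Finset.sum_congr rfl fun i _ => Finset.sum_congr rfl fun y _ => by ring

theorem inner_conv_left (a u v : G → ℂ) :
    ⟪ℓ² (conv a u), ℓ² v⟫_ℂ = ⟪ℓ² u, ℓ² (conv (fun y => starRingEnd ℂ (a y⁻¹)) v)⟫_ℂ := by
  simp only [PiLp.inner_apply, RCLike.inner_apply', conv, map_mul, map_sum, map_inv₀,
    map_natCast, Finset.mul_sum, Finset.sum_mul]
  rw [Finset.sum_comm]
  conv_rhs => rw [Finset.sum_comm, ← Equiv.sum_comp (Equiv.inv G)]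
  refine Finset.sum_congr rfl fun y _ => ?_
  rw [← Equiv.sum_comp (Equiv.mulLeft y)]
  refine Finset.sum_congr rfl fun t _ => ?_
  simp only [Equiv.coe_mulLeft, Equiv.inv_apply, inv_inv, inv_mul_cancel_left]
  ring

end Convolution

section Schur

variable {G : Type*} [Group G] [Fintype G] {m n : Type*} [Fintype m] [DecidableEq m]
  [Fintype n] [DecidableEq n]

def HasScalarCommutant (ρ : G →* Matrix m m ℂ) : Prop :=
  ∀ M : Matrix m m ℂ, (∀ x, M * ρ x = ρ x * M) → ∃ c : ℂ, M = c • (1 : Matrix m m ℂ)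

def IntertwinersVanish (ρ : G →* Matrix m m ℂ) (σ : G →* Matrix n n ℂ) : Prop :=
  ∀ T : Matrix m n ℂ, (∀ x, ρ x * T = T * σ x) → T = 0

theorem map_mul_sum_mul_map_inv (ρ : G →* Matrix m m ℂ) (σ : G →* Matrix n n ℂ)
    (A : Matrix m n ℂ) (g : G) :
    ρ g * ∑ x, ρ x * A * σ x⁻¹ = (∑ x, ρ x * A * σ x⁻¹) * σ g := by
  rw [Matrix.mul_sum, Matrix.sum_mul]
  conv_rhs => rw [← Equiv.sum_comp (Equiv.mulLeft g)]
  refine Finset.sum_congr rfl fun x _ => ?_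
  simp only [Equiv.coe_mulLeft, mul_inv_rev, map_mul]
  rw [Matrix.mul_assoc _ _ (σ g), Matrix.mul_assoc (σ x⁻¹), ← map_mul σ g⁻¹ g, inv_mul_cancel,
    map_one, Matrix.mul_one]
  simp only [Matrix.mul_assoc]

theorem sum_mul_mul_map_inv_eq_zero {ρ : G →* Matrix m m ℂ} {σ : G →* Matrix n n ℂ}
    (h : IntertwinersVanish ρ σ) (A : Matrix m n ℂ) : ∑ x, ρ x * A * σ x⁻¹ = 0 :=
  h _ (map_mul_sum_mul_map_inv ρ σ A)

theorem sum_mul_mul_map_inv_eq_smul_one [Nonempty m] {ρ : G →* Matrix m m ℂ}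
    (h : HasScalarCommutant ρ) (A : Matrix m m ℂ) :
    ∑ x, ρ x * A * ρ x⁻¹ = (Fintype.card G * A.trace / Fintype.card m) • (1 : Matrix m m ℂ) := by
  obtain ⟨c, hc⟩ := h _ fun g => (map_mul_sum_mul_map_inv ρ ρ A g).symm
  have htrace : (∑ x, ρ x * A * ρ x⁻¹).trace = Fintype.card G * A.trace := by
    have hconj (x : G) : (ρ x * A * ρ x⁻¹).trace = A.trace := by
      rw [Matrix.trace_mul_cycle, ← map_mul, inv_mul_cancel, map_one, one_mul]
    simp [Matrix.trace_sum, hconj]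
  rw [hc, Matrix.trace_smul, Matrix.trace_one, smul_eq_mul] at htrace
  rw [hc, ← htrace, mul_div_cancel_right₀ _ (Nat.cast_ne_zero.mpr Fintype.card_ne_zero)]

theorem mul_single_one_mul_apply {R l o : Type*} [Semiring R] (M : Matrix l m R)
    (N : Matrix n o R) (a : m) (b : n) (c : l) (e : o) :
    (M * Matrix.single a b (1 : R) * N) c e = M c a * N b e := by
  simp [Matrix.mul_apply, Matrix.single_apply, ite_and, Finset.sum_ite_eq]

/- The character sum `∑ₓ χ_ρ(x) σ(x⁻¹)` is, entrywise, a sum of entries of averaged matrix units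
`∑ₓ ρ x * E_ij * σ x⁻¹`, to which Schur's lemma applies. -/
theorem sum_trace_smul_map_inv_apply (ρ : G →* Matrix m m ℂ) (σ : G →* Matrix n n ℂ) (j l : n) :
    (∑ x, (ρ x).trace • σ x⁻¹) j l
      = ∑ i, (∑ x, ρ x * Matrix.single i j (1 : ℂ) * σ x⁻¹ : Matrix m n ℂ) i l := by
  simp only [Matrix.sum_apply, Matrix.smul_apply, smul_eq_mul, mul_single_one_mul_apply,
    Matrix.trace, Matrix.diag, Finset.sum_mul]
  exact Finset.sum_comm

theorem sum_trace_smul_map_inv_eq_zero {ρ : G →* Matrix m m ℂ} {σ : G →* Matrix n n ℂ}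
    (h : IntertwinersVanish ρ σ) : ∑ x, (ρ x).trace • σ x⁻¹ = 0 := by
  ext j l
  simp [sum_trace_smul_map_inv_apply, sum_mul_mul_map_inv_eq_zero h]

theorem sum_trace_smul_map_inv_self [Nonempty m] {ρ : G →* Matrix m m ℂ}
    (h : HasScalarCommutant ρ) :
    ∑ x, (ρ x).trace • ρ x⁻¹ = (Fintype.card G / Fintype.card m : ℂ) • (1 : Matrix m m ℂ) := by
  ext j l
  rw [sum_trace_smul_map_inv_apply]
  simp only [sum_mul_mul_map_inv_eq_smul_one h, Matrix.smul_apply, Matrix.one_apply]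
  by_cases hjl : j = l
  · simp [hjl, Matrix.trace_single_eq_same]
  · simp [hjl, Ne.symm hjl, Matrix.trace_single_eq_of_ne]

end Schur

section Characters

variable {G : Type*} [Group G] {m n : Type*} [Fintype m] [DecidableEq m]

def charKernel (ρ : G →* Matrix m m ℂ) : G → ℂ :=
  fun x => Fintype.card m * (ρ x).trace

theorem gwavelet_eq_sum {k : ℕ} {d : Fin k → ℕ}
    {π : (r : Fin k) → G →* Matrix (Fin (d r)) (Fin (d r)) ℂ} (u : Fin k → ℂ) :
    gwavelet d π u = ∑ r, u r • charKernel (π r) := by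
  ext x
  simp only [gwavelet, charKernel, Finset.sum_apply, Pi.smul_apply, smul_eq_mul, Fintype.card_fin]
  exact Finset.sum_congr rfl fun r _ => by ring

theorem map_inv_eq_star {ρ : G →* Matrix m m ℂ} (hρ : ∀ x, ρ x ∈ Matrix.unitaryGroup m ℂ)
    (x : G) : ρ x⁻¹ = star (ρ x) := by
  calc ρ x⁻¹ = ρ x⁻¹ * (ρ x * star (ρ x)) := by
        rw [Matrix.mem_unitaryGroup_iff.mp (hρ x), mul_one]
    _ = star (ρ x) := by rw [← mul_assoc, ← map_mul, inv_mul_cancel, map_one, one_mul]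

theorem conj_charKernel_inv {ρ : G →* Matrix m m ℂ} (hρ : ∀ x, ρ x ∈ Matrix.unitaryGroup m ℂ)
    (x : G) : starRingEnd ℂ (charKernel ρ x⁻¹) = charKernel ρ x := by
  simp [charKernel, map_inv_eq_star hρ, Matrix.star_eq_conjTranspose, Matrix.trace_conjTranspose]

variable [Fintype G] [Fintype n] [DecidableEq n]

theorem conv_charKernel_apply (ρ : G →* Matrix m m ℂ) (σ : G →* Matrix n n ℂ) (x : G) :
    conv (charKernel ρ) (charKernel σ) x
      = Fintype.card m * Fintype.card n / Fintype.card G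
        * ((∑ y, (ρ y).trace • σ y⁻¹) * σ x).trace := by
  simp only [conv, charKernel, map_mul, Matrix.sum_mul, Matrix.trace_sum, Matrix.smul_mul,
    Matrix.trace_smul, smul_eq_mul, Finset.mul_sum]
  exact Finset.sum_congr rfl fun y _ => by ring

theorem conv_charKernel_eq_zero {ρ : G →* Matrix m m ℂ} {σ : G →* Matrix n n ℂ}
    (h : IntertwinersVanish ρ σ) : conv (charKernel ρ) (charKernel σ) = 0 := by
  ext x
  simp [conv_charKernel_apply, sum_trace_smul_map_inv_eq_zero h]

theorem conv_charKernel_self [Nonempty m] {ρ : G →* Matrix m m ℂ} (h : HasScalarCommutant ρ) :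
    conv (charKernel ρ) (charKernel ρ) = charKernel ρ := by
  ext x
  have hG : (Fintype.card G : ℂ) ≠ 0 := Nat.cast_ne_zero.mpr Fintype.card_ne_zero
  have hm : (Fintype.card m : ℂ) ≠ 0 := Nat.cast_ne_zero.mpr Fintype.card_ne_zero
  rw [conv_charKernel_apply, sum_trace_smul_map_inv_self h, Matrix.smul_mul, Matrix.one_mul,
    Matrix.trace_smul, smul_eq_mul, charKernel]
  field_simp

theorem inner_conv_charKernel_left {ρ : G →* Matrix m m ℂ}
    (hρ : ∀ x, ρ x ∈ Matrix.unitaryGroup m ℂ) (u v : G → ℂ) :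
    ⟪ℓ² (conv (charKernel ρ) u), ℓ² v⟫_ℂ = ⟪ℓ² u, ℓ² (conv (charKernel ρ) v)⟫_ℂ := by
  rw [inner_conv_left, funext (conj_charKernel_inv hρ)]

theorem inner_conv_charKernel_conv_charKernel {ρ : G →* Matrix m m ℂ}
    (hρ : ∀ x, ρ x ∈ Matrix.unitaryGroup m ℂ) (σ : G →* Matrix n n ℂ) (u v : G → ℂ) :
    ⟪ℓ² (conv (charKernel ρ) u), ℓ² (conv (charKernel σ) v)⟫_ℂ
      = ⟪ℓ² u, ℓ² (conv (conv (charKernel ρ) (charKernel σ)) v)⟫_ℂ := by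
  rw [inner_conv_charKernel_left hρ, conv_assoc]

theorem inner_conv_charKernel_eq_zero {ρ : G →* Matrix m m ℂ} {σ : G →* Matrix n n ℂ}
    (hρ : ∀ x, ρ x ∈ Matrix.unitaryGroup m ℂ) (h : IntertwinersVanish ρ σ) (u v : G → ℂ) :
    ⟪ℓ² (conv (charKernel ρ) u), ℓ² (conv (charKernel σ) v)⟫_ℂ = 0 := by
  rw [inner_conv_charKernel_conv_charKernel hρ, conv_charKernel_eq_zero h, conv_zero_left]
  simp

theorem inner_conv_charKernel_sub_self [Nonempty m] {ρ : G →* Matrix m m ℂ}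
    (hρ : ∀ x, ρ x ∈ Matrix.unitaryGroup m ℂ) (h : HasScalarCommutant ρ) (f : G → ℂ) :
    ⟪ℓ² (conv (charKernel ρ) f), (ℓ² f) - ℓ² (conv (charKernel ρ) f)⟫_ℂ = 0 := by
  rw [inner_sub_right, inner_conv_charKernel_conv_charKernel hρ, conv_charKernel_self h,
    inner_conv_charKernel_left hρ, sub_self]

end Characters

section FrameBounds

variable {G : Type*} [Group G] [Fintype G] {k : ℕ} {d : Fin k → ℕ}
  {π : (r : Fin k) → G →* Matrix (Fin (d r)) (Fin (d r)) ℂ}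

theorem nsq_conv_gwavelet (hunit : ∀ r x, π r x ∈ Matrix.unitaryGroup (Fin (d r)) ℂ)
    (hneq : Pairwise fun r s => IntertwinersVanish (π r) (π s)) (u : Fin k → ℂ) (f : G → ℂ) :
    nsq (conv (gwavelet d π u) f)
      = ∑ r, Complex.normSq (u r) * nsq (conv (charKernel (π r)) f) := by
  have horth : Pairwise fun r s =>
      ⟪ℓ² (u r • conv (charKernel (π r)) f), ℓ² (u s • conv (charKernel (π s)) f)⟫_ℂ = 0 :=
    fun r s hrs => by
      simp only [WithLp.toLp_smul, inner_smul_left, inner_smul_right,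
        inner_conv_charKernel_eq_zero (hunit r) (hneq hrs), mul_zero]
  rw [gwavelet_eq_sum, conv_sum_smul_left, nsq_eq_norm_sq, WithLp.toLp_sum,
    norm_sum_sq_of_pairwise_inner_eq_zero horth, Finset.mul_sum]
  refine Finset.sum_congr rfl fun r _ => ?_
  rw [nsq_eq_norm_sq, WithLp.toLp_smul, norm_smul, mul_pow, Complex.normSq_eq_norm_sq]
  ring

theorem sum_nsq_conv_charKernel_le (hdpos : ∀ r, 0 < d r)
    (hunit : ∀ r x, π r x ∈ Matrix.unitaryGroup (Fin (d r)) ℂ)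
    (hirr : ∀ r, HasScalarCommutant (π r))
    (hneq : Pairwise fun r s => IntertwinersVanish (π r) (π s)) (f : G → ℂ) :
    ∑ r, nsq (conv (charKernel (π r)) f) ≤ nsq f := by
  have hproj (r : Fin k) :
      ⟪ℓ² (conv (charKernel (π r)) f), (ℓ² f) - ℓ² (conv (charKernel (π r)) f)⟫_ℂ = 0 :=
    have : Nonempty (Fin (d r)) := Fin.pos_iff_nonempty.mp (hdpos r)
    inner_conv_charKernel_sub_self (hunit r) (hirr r) f
  have hbessel := sum_norm_sq_le_of_orthogonal_projections
    (fun r s hrs => inner_conv_charKernel_eq_zero (hunit r) (hneq hrs) f f) hproj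
  simp only [nsq_eq_norm_sq, ← Finset.mul_sum]
  exact mul_le_mul_of_nonneg_left hbessel (by positivity)

theorem sum_nsq_conv_gwavelet_le (hdpos : ∀ r, 0 < d r)
    (hunit : ∀ r x, π r x ∈ Matrix.unitaryGroup (Fin (d r)) ℂ)
    (hirr : ∀ r, HasScalarCommutant (π r))
    (hneq : Pairwise fun r s => IntertwinersVanish (π r) (π s))
    {ι : Type*} [Fintype ι] (u : ι → Fin k → ℂ) {c : ℝ} (hc0 : 0 ≤ c)
    (hc : ∀ r, ∑ j, Complex.normSq (u j r) ≤ c) (f : G → ℂ) :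
    ∑ j, nsq (conv (gwavelet d π (u j)) f) ≤ c * nsq f :=
  calc ∑ j, nsq (conv (gwavelet d π (u j)) f)
      = ∑ r, (∑ j, Complex.normSq (u j r)) * nsq (conv (charKernel (π r)) f) := by
        simp only [nsq_conv_gwavelet hunit hneq, Finset.sum_mul]
        exact Finset.sum_comm
    _ ≤ ∑ r, c * nsq (conv (charKernel (π r)) f) :=
        Finset.sum_le_sum fun r _ => mul_le_mul_of_nonneg_right (hc r) (nsq_nonneg _)
    _ ≤ c * nsq f := by
        rw [← Finset.mul_sum]
        exact mul_le_mul_of_nonneg_left (sum_nsq_conv_charKernel_le hdpos hunit hirr hneq f) hc0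

theorem nsq_conv_gwavelet_le (hdpos : ∀ r, 0 < d r)
    (hunit : ∀ r x, π r x ∈ Matrix.unitaryGroup (Fin (d r)) ℂ)
    (hirr : ∀ r, HasScalarCommutant (π r))
    (hneq : Pairwise fun r s => IntertwinersVanish (π r) (π s))
    {u : Fin k → ℂ} {c : ℝ} (hc0 : 0 ≤ c) (hc : ∀ r, Complex.normSq (u r) ≤ c) (f : G → ℂ) :
    nsq (conv (gwavelet d π u) f) ≤ c * nsq f := by
  simpa using sum_nsq_conv_gwavelet_le hdpos hunit hirr hneq (fun _ : Unit => u) hc0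
    (by simpa using hc) f

end FrameBounds

theorem sum_nsq_Upath_le {G : Type*} [Group G] [Fintype G] {J : ℕ} (ψ : Fin J → G → ℂ) {c : ℝ}
    (hc0 : 0 ≤ c) (hψ : ∀ g, ∑ j, nsq (conv (ψ j) g) ≤ c * nsq g) (n : ℕ) (g : G → ℂ) :
    ∑ p : Fin n → Fin J, nsq (Upath ψ (List.ofFn p) g) ≤ c ^ n * nsq g := by
  induction n generalizing g with
  | zero => simp [Upath]
  | succ n ih =>
    rw [← (Fin.consEquiv fun _ => Fin J).sum_comp, Fintype.sum_prod_type]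
    simp only [Fin.consEquiv, Equiv.coe_fn_mk, List.ofFn_succ, Fin.cons_zero, Fin.cons_succ,
      Upath]
    calc ∑ j, ∑ q : Fin n → Fin J,
          nsq (Upath ψ (List.ofFn q) fun x => ((‖conv (ψ j) g x‖ : ℝ) : ℂ))
        ≤ ∑ j, c ^ n * nsq (conv (ψ j) g) :=
          Finset.sum_le_sum fun j _ => (ih _).trans_eq (by rw [nsq_norm])
      _ ≤ c ^ (n + 1) * nsq g := by
          rw [← Finset.mul_sum, pow_succ, mul_assoc]
          exact mul_le_mul_of_nonneg_left (hψ g) (pow_nonneg hc0 n)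

theorem stmt14_general {G : Type*} [Group G] [Fintype G]
    {k : ℕ} (d : Fin k → ℕ) (hdpos : ∀ r, 0 < d r)
    (π : (r : Fin k) → G →* Matrix (Fin (d r)) (Fin (d r)) ℂ)
    (hunit : ∀ r x, π r x ∈ Matrix.unitaryGroup (Fin (d r)) ℂ)
    (hirr : ∀ (r : Fin k) (M : Matrix (Fin (d r)) (Fin (d r)) ℂ),
      (∀ x, M * π r x = π r x * M) → ∃ c : ℂ, M = c • (1 : Matrix (Fin (d r)) (Fin (d r)) ℂ))
    (hneq : ∀ (r s : Fin k), r ≠ s → ∀ T : Matrix (Fin (d r)) (Fin (d s)) ℂ,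
      (∀ x, π r x * T = T * π s x) → T = 0)
    (hcard : Nat.card (ConjClasses G) = k)
    {J : ℕ} (γ : Fin (J + 1) → Fin k → ℂ)
    (hPar : ∀ r : Fin k, ∑ j : Fin (J + 1), Complex.normSq (γ j r) = 1)
    (β B : ℝ) (hβ : ∀ r : Fin k, β ≤ Complex.normSq (γ 0 r))
    (hB : ∀ r : Fin k, Complex.normSq (γ 0 r) ≤ B)
    (f : G → ℂ) (m : ℕ) :
    ∑ p : Fin (m + 1) → Fin J, nsq (Sop d π γ (List.ofFn p) f)
      ≤ B * (1 - β) ^ (m + 1) * nsq f := by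
  obtain ⟨r₀⟩ : Nonempty (Fin k) := Fin.pos_iff_nonempty.mp (hcard ▸ Nat.card_pos)
  have hβ1 : β ≤ 1 := calc
    β ≤ Complex.normSq (γ 0 r₀) := hβ r₀
    _ ≤ ∑ j, Complex.normSq (γ j r₀) :=
      Finset.single_le_sum (fun j _ => Complex.normSq_nonneg (γ j r₀)) (Finset.mem_univ 0)
    _ = 1 := hPar r₀
  have hB0 : 0 ≤ B := (Complex.normSq_nonneg _).trans (hB r₀)
  have hlayer (g : G → ℂ) :
      ∑ j : Fin J, nsq (conv (gwavelet d π (γ j.succ)) g) ≤ (1 - β) * nsq g := by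
    refine sum_nsq_conv_gwavelet_le hdpos hunit hirr hneq _ (sub_nonneg.mpr hβ1) (fun r => ?_) g
    have := hPar r
    rw [Fin.sum_univ_succ] at this
    linarith [hβ r]
  calc ∑ p : Fin (m + 1) → Fin J, nsq (Sop d π γ (List.ofFn p) f)
      ≤ ∑ p : Fin (m + 1) → Fin J,
          B * nsq (Upath (fun j => gwavelet d π (γ j.succ)) (List.ofFn p) f) :=
        Finset.sum_le_sum fun p _ => nsq_conv_gwavelet_le hdpos hunit hirr hneq hB0 hB _
    _ ≤ B * ((1 - β) ^ (m + 1) * nsq f) := by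
        rw [← Finset.mul_sum]
        exact mul_le_mul_of_nonneg_left
          (sum_nsq_Upath_le _ (sub_nonneg.mpr hβ1) hlayer (m + 1) f) hB0
    _ = B * (1 - β) ^ (m + 1) * nsq f := by ring

theorem stmt14 {G : Type*} [Group G] [Fintype G]
    {k : ℕ} (d : Fin k → ℕ) (hdpos : ∀ r, 0 < d r)
    (π : (r : Fin k) → G →* Matrix (Fin (d r)) (Fin (d r)) ℂ)
    (hunit : ∀ r x, π r x ∈ Matrix.unitaryGroup (Fin (d r)) ℂ)
    (hirr : ∀ (r : Fin k) (M : Matrix (Fin (d r)) (Fin (d r)) ℂ),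
      (∀ x, M * π r x = π r x * M) → ∃ c : ℂ, M = c • (1 : Matrix (Fin (d r)) (Fin (d r)) ℂ))
    (hneq : ∀ (r s : Fin k), r ≠ s → ∀ T : Matrix (Fin (d r)) (Fin (d s)) ℂ,
      (∀ x, π r x * T = T * π s x) → T = 0)
    (hcard : Nat.card (ConjClasses G) = k)
    {J : ℕ} (γ : Fin (J + 1) → Fin k → ℂ)
    (hPar : ∀ r : Fin k, ∑ j : Fin (J + 1), Complex.normSq (γ j r) = 1)
    (β B : ℝ) (hβpos : 0 < β) (hβ : ∀ r : Fin k, β ≤ Complex.normSq (γ 0 r))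
    (hB : ∀ r : Fin k, Complex.normSq (γ 0 r) ≤ B)
    (f : G → ℂ) (m : ℕ) :
    ∑ p : Fin (m + 1) → Fin J, nsq (Sop d π γ (List.ofFn p) f)
      ≤ B * (1 - β) ^ (m + 1) * nsq f :=
  stmt14_general d hdpos π hunit hirr hneq hcard γ hPar β B hβ hB f m
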